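/- In the synchronous singing protocol on a static graph where all agents start in state Un: once an agent reaches state In or state Out, its state never changes in any subsequent round, and no two adjacent agents are ever simultaneously in state In. -/
import Mathlib


/-- The three possible states of an agent in the singing protocol. -/
inductive AgentState : Type
  | Un : AgentState
  | In : AgentState
  | Out : AgentState
deriving DecidableEq

open AgentState

open Classical in
/-- One synchronous round of the singing protocol on a static graph `G`, given the
`ℓ`-values `ℓ` chosen by the agents for the round and the current states `σ`:
an `Un` agent with an `In` neighbor becomes `Out`; an `Un` agent with no `In` neighbor
becomes `In` iff its `ℓ`-value strictly exceeds those of all its `Un` neighbors;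
an `In` agent stays `In` unless it hears note 0 (has an `In` neighbor), in which case it
becomes `Un`; an `Out` agent stays `Out` iff it still has an `In` neighbor. -/
noncomputable def step {V : Type*} (G : SimpleGraph V) (ℓ : V → ℕ)
    (σ : V → AgentState) : V → AgentState := fun v =>
  match σ v with
  | Un => if ∃ u, G.Adj v u ∧ σ u = In then Out
      else if ∀ u, G.Adj v u → σ u = Un → ℓ u < ℓ v then In else Un
  | In => if ∃ u, G.Adj v u ∧ σ u = In then Un else In
  | Out => if ∃ u, G.Adj v u ∧ σ u = In then Out else Un

/-- The configuration after `i` rounds of the synchronous singing protocol, started from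
the all-`Un` configuration, where `ℓ i` gives the agents' `ℓ`-values in round `i`. -/
noncomputable def config {V : Type*} (G : SimpleGraph V) (ℓ : ℕ → V → ℕ) :
    ℕ → V → AgentState
  | 0 => fun _ => Un
  | i + 1 => step G (ℓ i) (config G ℓ i)

/-- On a static graph, starting from all-`Un`: once an agent is `In` or `Out` its state
never changes again, and no two adjacent agents are ever simultaneously `In`. -/
theorem stmt_11 {V : Type*} (G : SimpleGraph V) (ℓ : ℕ → V → ℕ) :
    (∀ i : ℕ, ∀ v : V,
      (config G ℓ i v = In → config G ℓ (i + 1) v = In) ∧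
      (config G ℓ i v = Out → config G ℓ (i + 1) v = Out)) ∧
    (∀ i : ℕ, ∀ u v : V, G.Adj u v →
      ¬(config G ℓ i u = In ∧ config G ℓ i v = In)) := by
  have inv : ∀ i : ℕ,
      (∀ u v : V, G.Adj u v → ¬(config G ℓ i u = In ∧ config G ℓ i v = In)) ∧
      (∀ v : V, config G ℓ i v = Out → ∃ u, G.Adj v u ∧ config G ℓ i u = In) := by
    intro i
    induction i with
    | zero => simp [config]
    | succ i ih =>
      obtain ⟨hInd, hOut⟩ := ih
      have stepIn : ∀ v, config G ℓ i v = In → config G ℓ (i + 1) v = In := by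
        intro v hv
        have hno : ¬ ∃ u, G.Adj v u ∧ config G ℓ i u = In := by
          rintro ⟨u, hadj, hu⟩; exact hInd v u hadj ⟨hv, hu⟩
        simp only [config, step, hv, if_neg hno]
      have key : ∀ w, config G ℓ (i + 1) w = In →
          (¬ ∃ u, G.Adj w u ∧ config G ℓ i u = In) ∧
          (config G ℓ i w = In ∨ (config G ℓ i w = Un ∧
            ∀ u, G.Adj w u → config G ℓ i u = Un → ℓ i u < ℓ i w)) := by
        intro w hw
        cases hcw : config G ℓ i w with
        | Un =>
          simp only [config, step, hcw] at hw
          split_ifs at hw with h1 h2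
          exact ⟨h1, Or.inr ⟨rfl, h2⟩⟩
        | In =>
          simp only [config, step, hcw] at hw
          split_ifs at hw with h1
          exact ⟨h1, Or.inl rfl⟩
        | Out =>
          simp only [config, step, hcw] at hw
          split_ifs at hw
      constructor
      · rintro u v hadj ⟨hu, hv⟩
        obtain ⟨hnu, hcu⟩ := key u hu
        obtain ⟨hnv, hcv⟩ := key v hv
        rcases hcu with hcu | ⟨hcu, hmu⟩
        · exact hnv ⟨u, hadj.symm, hcu⟩
        · rcases hcv with hcv | ⟨hcv, hmv⟩
          · exact hnu ⟨v, hadj, hcv⟩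
          · exact absurd (hmu v hadj hcv) (not_lt.mpr (hmv u hadj.symm hcu).le)
      · intro v hv
        cases hcv : config G ℓ i v with
        | Un =>
          simp only [config, step, hcv] at hv
          split_ifs at hv with h1 h2
          obtain ⟨u, hadj, hu⟩ := h1
          exact ⟨u, hadj, stepIn u hu⟩
        | In =>
          simp only [config, step, hcv] at hv
          split_ifs at hv
        | Out =>
          simp only [config, step, hcv] at hv
          split_ifs at hv with h1
          obtain ⟨u, hadj, hu⟩ := h1
          exact ⟨u, hadj, stepIn u hu⟩
  refine ⟨fun i v => ⟨fun hv => ?_, fun hv => ?_⟩, fun i => (inv i).1⟩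
  · have hno : ¬ ∃ u, G.Adj v u ∧ config G ℓ i u = In := by
      rintro ⟨u, hadj, hu⟩; exact (inv i).1 v u hadj ⟨hv, hu⟩
    simp only [config, step, hv, if_neg hno]
  · obtain ⟨u, hadj, hu⟩ := (inv i).2 v hv
    have hnu : ¬ ∃ w, G.Adj u w ∧ config G ℓ i w = In := by
      rintro ⟨w, hadj', hw⟩; exact (inv i).1 u w hadj' ⟨hu, hw⟩
    have hu' : config G ℓ (i + 1) u = In := by
      simp only [config, step, hu, if_neg hnu]
    simp only [config, step, hv]
    exact if_pos (⟨u, hadj, hu⟩ : ∃ u, G.Adj v u ∧ config G ℓ i u = In)
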